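/- arXiv:2602.04852 — 2 statements merged into one kernel-verified Lean document; each statement's English description precedes it below -/
import Mathlib

section
/- Let K ∈ ℝ^{T×d_k} have full column rank and let V ∈ ℝ^{T×d_v} be nonzero, with orthogonal decomposition V = V_∥ + V_⊥ where the columns of V_∥ lie in the column space of K and the columns of V_⊥ are orthogonal to it, and assume V_∥ ≠ 0. Then S := Vᵀ K satisfies er(S) ≥ er(V_∥) / κ(K)², where er denotes effective rank and κ the spectral ℓ² condition number. -/
open Matrix BigOperators

/-- Squared Frobenius norm of a real matrix. -/
noncomputable def frobSq {m n : Type*} [Fintype m] [Fintype n] (A : Matrix m n ℝ) : ℝ :=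
  ∑ i, ∑ j, A i j ^ 2

/-- Spectral norm (ℓ²-operator norm) of a real matrix. -/
noncomputable def specNorm {m n : Type*} [Fintype m] [Fintype n] [DecidableEq n]
    (A : Matrix m n ℝ) : ℝ :=
  ‖LinearMap.toContinuousLinearMap (Matrix.toEuclideanLin A)‖

/-- Effective rank (stable rank) `er(A) = ‖A‖_F² / ‖A‖_2²`. -/
noncomputable def effRank {m n : Type*} [Fintype m] [Fintype n] [DecidableEq n]
    (A : Matrix m n ℝ) : ℝ :=
  frobSq A / specNorm A ^ 2

/-- The singular values of `A`: square roots of the eigenvalues of `AᵀA`. -/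
noncomputable def singVals {m n : Type*} [Fintype m] [Fintype n] [DecidableEq n]
    (A : Matrix m n ℝ) : n → ℝ :=
  fun i => Real.sqrt ((show (Aᵀ * A).IsHermitian by
    simpa using Matrix.isHermitian_conjTranspose_mul_self A).eigenvalues i)

/-- The largest singular value `σ_max`. -/
noncomputable def sigmaMax {m n : Type*} [Fintype m] [Fintype n] [DecidableEq n]
    (A : Matrix m n ℝ) : ℝ :=
  sSup (Set.range (singVals A))

/-- The smallest singular value `σ_min`. -/
noncomputable def sigmaMin {m n : Type*} [Fintype m] [Fintype n] [DecidableEq n]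
    (A : Matrix m n ℝ) : ℝ :=
  sInf (Set.range (singVals A))

/-- The ℓ² (spectral) condition number `κ(A) = σ_max(A) / σ_min(A)`. -/
noncomputable def condNum {m n : Type*} [Fintype m] [Fintype n] [DecidableEq n]
    (A : Matrix m n ℝ) : ℝ :=
  sigmaMax A / sigmaMin A

/-! Since `Vperpᵀ K = 0`, the memory is `S = Vparᵀ K`. A column `v` of `Vpar` is `K w` for some
`w`, and in an orthonormal eigenbasis of `KᵀK` (eigenvalues `λᵢ ≥ 0`, coordinates `cᵢ` of `w`)
`‖Kᵀ v‖² = ∑ λᵢ² cᵢ² ≥ σ_min² ∑ λᵢ cᵢ² = σ_min² ‖v‖²`; summing over the columns gives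
`‖S‖_F² ≥ σ_min² ‖Vpar‖_F²`. On the other side `‖S‖₂ ≤ ‖Vpar‖₂ ‖K‖₂ ≤ ‖Vpar‖₂ σ_max`, and the
quotient of the two bounds is the claim. -/

namespace Matrix.IsHermitian

variable {n : Type*} [Fintype n] [DecidableEq n] {A : Matrix n n ℝ}

lemma dotProduct_eq_sum_eigenvectorBasis (hA : A.IsHermitian) (x y : n → ℝ) :
    x ⬝ᵥ y = ∑ i, (⇑(hA.eigenvectorBasis i) ⬝ᵥ x) * (⇑(hA.eigenvectorBasis i) ⬝ᵥ y) := by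
  have := hA.eigenvectorBasis.sum_inner_mul_inner (WithLp.toLp 2 x) (WithLp.toLp 2 y)
  simp only [EuclideanSpace.inner_eq_star_dotProduct, star_trivial, dotProduct_comm y] at this
  exact this.symm

lemma eigenvectorBasis_dotProduct_mulVec (hA : A.IsHermitian) (i : n) (x : n → ℝ) :
    ⇑(hA.eigenvectorBasis i) ⬝ᵥ (A *ᵥ x) =
      hA.eigenvalues i * (⇑(hA.eigenvectorBasis i) ⬝ᵥ x) := by
  have hAt : Aᵀ = A := by simpa [conjTranspose_eq_transpose_of_trivial] using hA.eq
  rw [dotProduct_mulVec, ← mulVec_transpose, hAt, hA.mulVec_eigenvectorBasis, smul_dotProduct,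
    smul_eq_mul]

lemma dotProduct_mulVec_le (hA : A.IsHermitian) {c : ℝ} (hc : ∀ i, hA.eigenvalues i ≤ c)
    (x : n → ℝ) : x ⬝ᵥ (A *ᵥ x) ≤ c * (x ⬝ᵥ x) := by
  rw [hA.dotProduct_eq_sum_eigenvectorBasis x, hA.dotProduct_eq_sum_eigenvectorBasis x x,
    Finset.mul_sum]
  refine Finset.sum_le_sum fun i _ => ?_
  rw [hA.eigenvectorBasis_dotProduct_mulVec]
  nlinarith [mul_self_nonneg (⇑(hA.eigenvectorBasis i) ⬝ᵥ x), hc i]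

end Matrix.IsHermitian

lemma Matrix.PosSemidef.mul_dotProduct_mulVec_le {n : Type*} [Fintype n] [DecidableEq n]
    {A : Matrix n n ℝ} (hA : A.PosSemidef) {c : ℝ} (hc : ∀ i, c ≤ hA.1.eigenvalues i)
    (x : n → ℝ) : c * (x ⬝ᵥ (A *ᵥ x)) ≤ (A *ᵥ x) ⬝ᵥ (A *ᵥ x) := by
  rw [hA.1.dotProduct_eq_sum_eigenvectorBasis x, hA.1.dotProduct_eq_sum_eigenvectorBasis (A *ᵥ x),
    Finset.mul_sum]
  refine Finset.sum_le_sum fun i _ => ?_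
  simp only [hA.1.eigenvectorBasis_dotProduct_mulVec]
  nlinarith [mul_nonneg (mul_nonneg (hA.eigenvalues_nonneg i) (sub_nonneg.2 (hc i)))
    (mul_self_nonneg (⇑(hA.1.eigenvectorBasis i) ⬝ᵥ x))]

lemma EuclideanSpace.real_norm_sq_eq_dotProduct {n : Type*} [Fintype n] (v : EuclideanSpace ℝ n) :
    ‖v‖ ^ 2 = v.ofLp ⬝ᵥ v.ofLp := by
  rw [← real_inner_self_eq_norm_sq, EuclideanSpace.inner_eq_star_dotProduct, star_trivial]

section Norms

variable {m n p : Type*} [Fintype m] [Fintype n] [Fintype p]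

open scoped Matrix.Norms.L2Operator

lemma specNorm_eq_l2_opNorm [DecidableEq n] (A : Matrix m n ℝ) : specNorm A = ‖A‖ := rfl

lemma specNorm_nonneg [DecidableEq n] (A : Matrix m n ℝ) : 0 ≤ specNorm A := norm_nonneg _

lemma specNorm_eq_zero [DecidableEq n] {A : Matrix m n ℝ} : specNorm A = 0 ↔ A = 0 := by
  rw [specNorm_eq_l2_opNorm, norm_eq_zero]

lemma specNorm_mul_le [DecidableEq n] [DecidableEq p] (A : Matrix m n ℝ) (B : Matrix n p ℝ) :
    specNorm (A * B) ≤ specNorm A * specNorm B :=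
  l2_opNorm_mul A B

lemma specNorm_transpose [DecidableEq m] [DecidableEq n] (A : Matrix m n ℝ) :
    specNorm Aᵀ = specNorm A := by
  simpa only [specNorm_eq_l2_opNorm, conjTranspose_eq_transpose_of_trivial] using
    l2_opNorm_conjTranspose A

lemma specNorm_le_of_forall_dotProduct_le [DecidableEq n] {A : Matrix m n ℝ} {c : ℝ} (hc : 0 ≤ c)
    (h : ∀ x, (A *ᵥ x) ⬝ᵥ (A *ᵥ x) ≤ c ^ 2 * (x ⬝ᵥ x)) : specNorm A ≤ c := by
  refine ContinuousLinearMap.opNorm_le_bound _ hc fun x => ?_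
  refine (pow_le_pow_iff_left₀ (norm_nonneg _) (by positivity) two_ne_zero).1 ?_
  simpa [mul_pow, EuclideanSpace.real_norm_sq_eq_dotProduct, toLpLin_apply] using h x

lemma frobSq_nonneg (A : Matrix m n ℝ) : 0 ≤ frobSq A := by
  unfold frobSq; positivity

lemma frobSq_eq_sum_dotProduct (A : Matrix m n ℝ) : frobSq A = ∑ i, A i ⬝ᵥ A i := by
  simp only [frobSq, dotProduct, sq]

lemma frobSq_transpose (A : Matrix m n ℝ) : frobSq Aᵀ = frobSq A :=
  Finset.sum_comm

end Norms

section SingularValues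

variable {m n p : Type*} [Fintype m] [Fintype n] [Fintype p]

lemma posSemidef_transpose_mul_self (K : Matrix m n ℝ) : (Kᵀ * K).PosSemidef := by
  simpa [conjTranspose_eq_transpose_of_trivial] using posSemidef_conjTranspose_mul_self K

lemma mulVec_dotProduct_mulVec_self (K : Matrix m n ℝ) (x : n → ℝ) :
    (K *ᵥ x) ⬝ᵥ (K *ᵥ x) = x ⬝ᵥ ((Kᵀ * K) *ᵥ x) := by
  rw [dotProduct_mulVec, ← mulVec_transpose, mulVec_mulVec, dotProduct_comm]

variable [DecidableEq n]

lemma sq_singVals (K : Matrix m n ℝ) (i : n) :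
    singVals K i ^ 2 = (posSemidef_transpose_mul_self K).1.eigenvalues i :=
  Real.sq_sqrt ((posSemidef_transpose_mul_self K).eigenvalues_nonneg i)

lemma sigmaMin_nonneg (K : Matrix m n ℝ) : 0 ≤ sigmaMin K :=
  Real.sInf_nonneg (by rintro _ ⟨j, rfl⟩; exact Real.sqrt_nonneg _)

lemma sigmaMax_nonneg (K : Matrix m n ℝ) : 0 ≤ sigmaMax K :=
  Real.sSup_nonneg (by rintro _ ⟨j, rfl⟩; exact Real.sqrt_nonneg _)

lemma sigmaMin_sq_le_eigenvalues (K : Matrix m n ℝ) (i : n) :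
    sigmaMin K ^ 2 ≤ (posSemidef_transpose_mul_self K).1.eigenvalues i := by
  rw [← sq_singVals]
  exact pow_le_pow_left₀ (sigmaMin_nonneg K) (csInf_le (Set.finite_range _).bddBelow ⟨i, rfl⟩) 2

lemma eigenvalues_le_sigmaMax_sq (K : Matrix m n ℝ) (i : n) :
    (posSemidef_transpose_mul_self K).1.eigenvalues i ≤ sigmaMax K ^ 2 := by
  rw [← sq_singVals]
  exact pow_le_pow_left₀ (Real.sqrt_nonneg _) (le_csSup (Set.finite_range _).bddAbove ⟨i, rfl⟩) 2

lemma specNorm_le_sigmaMax (K : Matrix m n ℝ) : specNorm K ≤ sigmaMax K := by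
  refine specNorm_le_of_forall_dotProduct_le (sigmaMax_nonneg K) fun x => ?_
  rw [mulVec_dotProduct_mulVec_self]
  exact (posSemidef_transpose_mul_self K).1.dotProduct_mulVec_le (eigenvalues_le_sigmaMax_sq K) x

lemma sigmaMin_sq_mul_dotProduct_le (K : Matrix m n ℝ) {v : m → ℝ}
    (hv : v ∈ Submodule.span ℝ (Set.range Kᵀ)) :
    sigmaMin K ^ 2 * (v ⬝ᵥ v) ≤ (Kᵀ *ᵥ v) ⬝ᵥ (Kᵀ *ᵥ v) := by
  obtain ⟨w, rfl⟩ : v ∈ LinearMap.range K.mulVecLin := by rw [range_mulVecLin]; exact hv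
  rw [mulVecLin_apply, mulVec_dotProduct_mulVec_self, mulVec_mulVec]
  exact (posSemidef_transpose_mul_self K).mul_dotProduct_mulVec_le (sigmaMin_sq_le_eigenvalues K) w

lemma sigmaMin_sq_mul_frobSq_le (K : Matrix m n ℝ) (P : Matrix m p ℝ)
    (hP : ∀ j, (fun i => P i j) ∈ Submodule.span ℝ (Set.range Kᵀ)) :
    sigmaMin K ^ 2 * frobSq P ≤ frobSq (Pᵀ * K) := by
  rw [← frobSq_transpose P, frobSq_eq_sum_dotProduct, frobSq_eq_sum_dotProduct, Finset.mul_sum]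
  refine Finset.sum_le_sum fun j _ => ?_
  have hrow : (Pᵀ * K) j = Kᵀ *ᵥ Pᵀ j := by rw [mulVec_transpose]; rfl
  rw [hrow]
  exact sigmaMin_sq_mul_dotProduct_le K (hP j)

end SingularValues

lemma effRank_div_sq_le {m n p q : Type*} [Fintype m] [Fintype n] [Fintype p] [Fintype q]
    [DecidableEq n] [DecidableEq q] {P : Matrix m n ℝ} {S : Matrix p q ℝ} {a b : ℝ}
    (hfrob : a ^ 2 * frobSq P ≤ frobSq S) (hspec : specNorm S ≤ specNorm P * b) :
    effRank P / (b / a) ^ 2 ≤ effRank S := by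
  have hspec_sq : specNorm S ^ 2 ≤ specNorm P ^ 2 * b ^ 2 := by
    rw [← mul_pow]; exact pow_le_pow_left₀ (specNorm_nonneg S) hspec 2
  rw [effRank, effRank, div_pow, div_div_div_eq, mul_comm (frobSq P)]
  rcases (specNorm_nonneg S).eq_or_lt with hS0 | hSpos
  · -- `S = 0`: the right side is `0 / 0 = 0`, and `hfrob` makes the left side nonpositive
    obtain rfl := specNorm_eq_zero.1 hS0.symm
    have hzero : frobSq (0 : Matrix p q ℝ) = 0 := by simp [frobSq]
    rw [hzero] at hfrob
    rw [hzero, zero_div]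
    exact div_nonpos_of_nonpos_of_nonneg hfrob (by positivity)
  · exact div_le_div₀ (frobSq_nonneg S) hfrob (by positivity) hspec_sq

theorem effRank_memory_lower_bound_general {T dk dv : ℕ}
    (K : Matrix (Fin T) (Fin dk) ℝ)
    (V Vpar Vperp : Matrix (Fin T) (Fin dv) ℝ)
    (hdecomp : V = Vpar + Vperp)
    (hpar : ∀ j : Fin dv,
      (fun i => Vpar i j) ∈ Submodule.span ℝ (Set.range Kᵀ))
    (hperp : Vperpᵀ * K = 0) :
    effRank Vpar / condNum K ^ 2 ≤ effRank (Vᵀ * K) := by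
  have hS : Vᵀ * K = Vparᵀ * K := by
    rw [hdecomp, transpose_add, Matrix.add_mul, hperp, add_zero]
  rw [hS]
  refine effRank_div_sq_le (sigmaMin_sq_mul_frobSq_le K Vpar hpar) ?_
  calc specNorm (Vparᵀ * K) ≤ specNorm Vparᵀ * specNorm K := specNorm_mul_le _ _
    _ ≤ specNorm Vpar * sigmaMax K := by
      rw [specNorm_transpose]
      exact mul_le_mul_of_nonneg_left (specNorm_le_sigmaMax K) (specNorm_nonneg _)

/-- Proposition: effective rank of the associative memory:
if `K` has full column rank, `V = V∥ + V⊥` with the columns of `V∥` in the column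
space of `K` and the columns of `V⊥` orthogonal to it, and `V∥ ≠ 0`, then
`er(Vᵀ K) ≥ er(V∥) / κ(K)²`. -/
theorem effRank_memory_lower_bound {T dk dv : ℕ}
    (K : Matrix (Fin T) (Fin dk) ℝ) (hK : K.rank = dk)
    (V Vpar Vperp : Matrix (Fin T) (Fin dv) ℝ) (hV : V ≠ 0)
    (hdecomp : V = Vpar + Vperp)
    (hpar : ∀ j : Fin dv,
      (fun i => Vpar i j) ∈ Submodule.span ℝ (Set.range Kᵀ))
    (hperp : Vperpᵀ * K = 0)
    (hVpar : Vpar ≠ 0) :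
    effRank Vpar / condNum K ^ 2 ≤ effRank (Vᵀ * K) :=
  effRank_memory_lower_bound_general K V Vpar Vperp hdecomp hpar hperp
end

section
/- Let T ∈ O(d_k) be an orthogonal matrix and let β_t ∈ ℝ, k_t, q_t ∈ ℝ^{d_k}, v_t ∈ ℝ^{d_v} for t = 1,…,T. Define the DeltaNet recurrence S_t = S_{t-1}(I − β_t k_t k_tᵀ) + β_t v_t k_tᵀ with S_0 = 0 and outputs o_t = S_t q_t, and the transformed recurrence S̃_t = S̃_{t-1}(I − β_t (Tk_t)(Tk_t)ᵀ) + β_t v_t (Tk_t)ᵀ with S̃_0 = 0 and outputs õ_t = S̃_t (Tq_t). Then S̃_t = S_t Tᵀ and õ_t = o_t for all t. -/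
/-!
Written in its error-correcting form `S ↦ S - β (S k - v) kᵀ`, the delta rule sees the state
only through `S k`, and `(S Tᵀ) (T k) = S k` when `Tᵀ T = 1`. Hence `S_t Tᵀ` satisfies the
recurrence with rotated keys, and the outputs agree by the same identity applied to `q_t`.
-/

open Matrix

namespace Matrix

variable {R m n : Type*} [CommRing R] [Fintype n]

theorem vecMulVec_mulVec_right (v : m → R) (T : Matrix n n R) (k : n → R) :
    vecMulVec v (T *ᵥ k) = vecMulVec v k * Tᵀ := by
  rw [vecMulVec_mul, vecMul_transpose]

variable [DecidableEq n]

def deltaUpdate (β : R) (k : n → R) (v : m → R) (S : Matrix m n R) : Matrix m n R :=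
  S * (1 - β • vecMulVec k k) + β • vecMulVec v k

theorem deltaUpdate_eq_sub (β : R) (k : n → R) (v : m → R) (S : Matrix m n R) :
    deltaUpdate β k v S = S - β • vecMulVec (S *ᵥ k - v) k := by
  rw [deltaUpdate, Matrix.mul_sub, Matrix.mul_one, Matrix.mul_smul, mul_vecMulVec,
    sub_vecMulVec, smul_sub]
  abel

theorem mul_transpose_mulVec_mulVec {T : Matrix n n R} (hT : Tᵀ * T = 1)
    (S : Matrix m n R) (q : n → R) : (S * Tᵀ) *ᵥ (T *ᵥ q) = S *ᵥ q := by
  rw [mulVec_mulVec, Matrix.mul_assoc, hT, Matrix.mul_one]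

theorem deltaUpdate_mulVec_mul_transpose {T : Matrix n n R} (hT : Tᵀ * T = 1)
    (β : R) (k : n → R) (v : m → R) (S : Matrix m n R) :
    deltaUpdate β (T *ᵥ k) v (S * Tᵀ) = deltaUpdate β k v S * Tᵀ := by
  rw [deltaUpdate_eq_sub, deltaUpdate_eq_sub, mul_transpose_mulVec_mulVec hT,
    vecMulVec_mulVec_right, Matrix.sub_mul, Matrix.smul_mul]

end Matrix

theorem deltanet_orthogonal_invariance_general {dv dk : ℕ}
    (T : Matrix (Fin dk) (Fin dk) ℝ) (hT₁ : Tᵀ * T = 1)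
    (β : ℕ → ℝ) (k q : ℕ → Fin dk → ℝ) (v : ℕ → Fin dv → ℝ)
    (S Stil : ℕ → Matrix (Fin dv) (Fin dk) ℝ)
    (hS0 : S 0 = 0) (hStil0 : Stil 0 = 0)
    (hrec : ∀ t : ℕ, 1 ≤ t →
      S t = S (t - 1) * ((1 : Matrix (Fin dk) (Fin dk) ℝ)
              - β t • Matrix.vecMulVec (k t) (k t))
            + β t • Matrix.vecMulVec (v t) (k t))
    (hrectil : ∀ t : ℕ, 1 ≤ t →
      Stil t = Stil (t - 1) * ((1 : Matrix (Fin dk) (Fin dk) ℝ)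
              - β t • Matrix.vecMulVec (T.mulVec (k t)) (T.mulVec (k t)))
            + β t • Matrix.vecMulVec (v t) (T.mulVec (k t))) :
    ∀ t : ℕ, Stil t = S t * Tᵀ ∧
      (Stil t).mulVec (T.mulVec (q t)) = (S t).mulVec (q t) := by
  have hstate : ∀ t, Stil t = S t * Tᵀ := by
    intro t
    induction t with
    | zero => rw [hS0, hStil0, Matrix.zero_mul]
    | succ t ih =>
      have hS : S (t + 1) = deltaUpdate (β (t + 1)) (k (t + 1)) (v (t + 1)) (S t) :=
        hrec (t + 1) t.succ_pos
      have hStil : Stil (t + 1) =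
          deltaUpdate (β (t + 1)) (T *ᵥ k (t + 1)) (v (t + 1)) (Stil t) :=
        hrectil (t + 1) t.succ_pos
      rw [hS, hStil, ih, deltaUpdate_mulVec_mul_transpose hT₁]
  intro t
  exact ⟨hstate t, by rw [hstate t, mul_transpose_mulVec_mulVec hT₁]⟩

/-- Orthogonal invariance of DeltaNet sequence mixing:
for an orthogonal `T`, the recurrence run on transformed keys `T k_t` and read out
with transformed queries `T q_t` satisfies `S̃_t = S_t Tᵀ` and produces the same
outputs `õ_t = o_t`. -/
theorem deltanet_orthogonal_invariance {dv dk : ℕ}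
    (T : Matrix (Fin dk) (Fin dk) ℝ) (hT₁ : Tᵀ * T = 1) (hT₂ : T * Tᵀ = 1)
    (β : ℕ → ℝ) (k q : ℕ → Fin dk → ℝ) (v : ℕ → Fin dv → ℝ)
    (S Stil : ℕ → Matrix (Fin dv) (Fin dk) ℝ)
    (hS0 : S 0 = 0) (hStil0 : Stil 0 = 0)
    (hrec : ∀ t : ℕ, 1 ≤ t →
      S t = S (t - 1) * ((1 : Matrix (Fin dk) (Fin dk) ℝ)
              - β t • Matrix.vecMulVec (k t) (k t))
            + β t • Matrix.vecMulVec (v t) (k t))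
    (hrectil : ∀ t : ℕ, 1 ≤ t →
      Stil t = Stil (t - 1) * ((1 : Matrix (Fin dk) (Fin dk) ℝ)
              - β t • Matrix.vecMulVec (T.mulVec (k t)) (T.mulVec (k t)))
            + β t • Matrix.vecMulVec (v t) (T.mulVec (k t))) :
    ∀ t : ℕ, Stil t = S t * Tᵀ ∧
      (Stil t).mulVec (T.mulVec (q t)) = (S t).mulVec (q t) :=
  deltanet_orthogonal_invariance_general T hT₁ β k q v S Stil hS0 hStil0 hrec hrectil
end
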